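/- Let E be the rank-two vector bundle on F_e described in the context. Then the generic splitting type (2,2) cannot occur for E: if one assumes d_1 = d_2 = 2, then the Aprodu–Brinzanescu integer ℓ(c_1, c_2, 2, r) := c_2 + 4(2e − r) − 2(b + 3e + 6 + t) + 4r − 4e equals b − t − 2e − 4, which is negative by the assumption b < 2e+4+t, contradicting the nonnegativity required by Aprodu–Brinzanescu's theorem. Hence the generic splitting type of E is (3,1). -/

import Mathlib

/-!
When `a = 2 d₁` the terms in `r` of the Aprodu–Brinzanescu integer cancel, so for the balanced
type `(2,2)` of a bundle with `c₁ · f = 4` it is `c₂ + 4e − 2(b_l + b_m)`, which for `E` is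
`b − t − 2e − 4 < 0`. This contradicts `ℓ ≥ 0`; the only other type with `d₁ + d₂ = 4` and
`1 ≤ d₂ ≤ d₁` is `(3,1)`.
-/

/-- The Aprodu–Brinzanescu integer `ℓ(c₁, c₂, d₁, r)` for a rank-two bundle
on `F_e` with `c₁ ≡ a C₀ + blbm f`, second Chern class `c₂`, first numerical
invariant `d₁` and second numerical invariant `r`. -/
def ellAB (e a blbm c₂ d₁ r : ℤ) : ℤ :=
  c₂ + a * (d₁ * e - r) - blbm * d₁ + 2 * d₁ * r - d₁ ^ 2 * e

/-- The Alzati–Besana bundle `E` on `F_e`, recorded through its Chern data,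
its generic splitting type `(d₁, d₂)` and its second numerical invariant `r`,
together with the facts from the context. -/
structure AlBeBundleGen where
  /-- the invariant `e ≥ 0` of the Hirzebruch surface `F_e` -/
  e : ℤ
  he : 0 ≤ e
  t : ℤ
  ht : 0 ≤ t
  b : ℤ
  hb₁ : -2 < b
  hb₂ : b < 2 * e + 4 + t
  /-- `c₂(E) = 3b + 8 + t` -/
  c₂ : ℤ
  hc₂ : c₂ = 3 * b + 8 + t
  /-- the generic splitting type `(d₁, d₂)` of `E`, with `d₂ ≤ d₁` -/
  d₁ : ℤ
  d₂ : ℤ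
  hsplit : d₂ ≤ d₁
  /-- `c₁(E)·f = 4` forces `d₁ + d₂ = 4` -/
  hdeg : d₁ + d₂ = 4
  /-- `E` very ample makes its restriction to a general fibre very ample, so
  both summands have positive degree -/
  hva : 1 ≤ d₂
  /-- the second numerical invariant `r` of `E` -/
  r : ℤ
  /-- Aprodu–Brinzanescu's theorem: `ℓ(c₁, c₂, d₁, r) ≥ 0` -/
  hAB : 0 ≤ ellAB e 4 (b + 3 * e + 6 + t) c₂ d₁ r

theorem ellAB_of_eq_two_mul {e a blbm c₂ d₁ : ℤ} (r : ℤ) (h : a = 2 * d₁) :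
    ellAB e a blbm c₂ d₁ r = c₂ + d₁ ^ 2 * e - blbm * d₁ := by
  subst h
  unfold ellAB
  ring

namespace AlBeBundleGen

variable (S : AlBeBundleGen)

theorem ellAB_two_eq (r : ℤ) :
    ellAB S.e 4 (S.b + 3 * S.e + 6 + S.t) S.c₂ 2 r = S.b - S.t - 2 * S.e - 4 := by
  rw [ellAB_of_eq_two_mul r (by norm_num), S.hc₂]
  ring

theorem ellAB_two_neg (r : ℤ) : ellAB S.e 4 (S.b + 3 * S.e + 6 + S.t) S.c₂ 2 r < 0 := by
  rw [ellAB_two_eq]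
  linarith [S.hb₂]

theorem d₁_ne_two : S.d₁ ≠ 2 := fun h =>
  (S.ellAB_two_neg S.r).not_ge (h ▸ S.hAB)

theorem splitting_type_eq : S.d₁ = 3 ∧ S.d₂ = 1 := by
  have := S.d₁_ne_two
  have := S.hsplit
  have := S.hdeg
  have := S.hva
  omega

end AlBeBundleGen

/-- Claim 1 of Proposition `Euniform`: `(2,2)` cannot occur
as the generic splitting type of `E`: for `d₁ = 2` the Aprodu–Brinzanescu
integer equals `b − t − 2e − 4 < 0`, contradicting `ℓ ≥ 0`; hence the generic
splitting type of `E` is `(3,1)`. -/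
theorem generic_splitting_type_is_31 (S : AlBeBundleGen) :
    (∀ r' : ℤ, ellAB S.e 4 (S.b + 3 * S.e + 6 + S.t) S.c₂ 2 r' =
        S.b - S.t - 2 * S.e - 4) ∧
    S.b - S.t - 2 * S.e - 4 < 0 ∧
    ¬(S.d₁ = 2 ∧ S.d₂ = 2) ∧
    (S.d₁ = 3 ∧ S.d₂ = 1) :=
  ⟨S.ellAB_two_eq, by linarith [S.hb₂], fun h => S.d₁_ne_two h.1, S.splitting_type_eq⟩
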